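/- arXiv:0804.4819 — 3 statements merged into one kernel-verified Lean document; each statement's English description precedes it below -/
import Mathlib

section
/- In the (τ,k)-game, after r complete time steps, the water level in every cup is at most H_r · τ/k, where H_r is the r-th harmonic number. Formally: let cups be indexed by a finite (or arbitrary) set; at each step j the adversary adds nonnegative amounts to the cups summing to at most τ, and then the player sets k of the cups with the largest current contents to zero. Then after r steps every cup holds at most (∑_{m=1}^{r} 1/m) · τ / k. -/
/-- Potential bound: `tgt τ k t m = τ * ∑_{j<t} m/(m+(j+1)k)`. -/
noncomputable def tgt (τ : ℝ) (k t m : ℕ) : ℝ :=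
  τ * ∑ j ∈ Finset.range t, (m : ℝ) / (m + (j + 1) * k)

lemma tgt_mono (τ : ℝ) (hτ : 0 ≤ τ) (k : ℕ) (hk : 0 < k) (t m' m : ℕ) (h : m' ≤ m) :
    tgt τ k t m' ≤ tgt τ k t m := by
  unfold tgt
  apply mul_le_mul_of_nonneg_left _ hτ
  apply Finset.sum_le_sum
  intro j _
  have hkR : (0:ℝ) < k := by exact_mod_cast hk
  have h1 : (0:ℝ) < (m':ℝ) + (j+1)*k := by positivity
  have h2 : (0:ℝ) < (m:ℝ) + (j+1)*k := by positivity
  rw [div_le_div_iff₀ h1 h2]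
  have hmm : (m':ℝ) ≤ m := by exact_mod_cast h
  have hc : (0:ℝ) ≤ ((j:ℝ)+1)*k := by positivity
  nlinarith [mul_le_mul_of_nonneg_right hmm hc]

lemma tgt_rec (τ : ℝ) (k : ℕ) (hk : 0 < k) (s m : ℕ) :
    ((k:ℝ) + m) * tgt τ k (s+1) m = (m:ℝ) * (tgt τ k s (m+k) + τ) := by
  have hkR : (0:ℝ) < k := by exact_mod_cast hk
  unfold tgt
  rw [Finset.sum_range_succ']
  push_cast
  have hsum : ((k:ℝ)+m) * ∑ j ∈ Finset.range s, (m:ℝ)/((m:ℝ)+((j:ℝ)+1+1)*k)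
      = (m:ℝ) * ∑ j ∈ Finset.range s, ((m:ℝ)+k)/((m:ℝ)+(k:ℝ)+((j:ℝ)+1)*k) := by
    rw [Finset.mul_sum, Finset.mul_sum]
    refine Finset.sum_congr rfl fun j _ => ?_
    have hd : (m:ℝ)+((j:ℝ)+1+1)*k ≠ 0 := by positivity
    have h2 : (m:ℝ)+(k:ℝ)+((j:ℝ)+1)*k = (m:ℝ)+((j:ℝ)+1+1)*k := by ring
    rw [h2]
    field_simp
    ring
  have hB : ((k:ℝ)+m) * ((m:ℝ)/((m:ℝ)+((0:ℝ)+1)*k)) = (m:ℝ) := by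
    have hd : (m:ℝ)+((0:ℝ)+1)*k ≠ 0 := by positivity
    field_simp
    ring
  linear_combination τ * hsum + τ * hB

/-- In the (τ,k)-game, after `r` complete time steps the water level in every
cup is at most `H_r · τ / k`. -/
theorem tau_k_game_backlog {ι : Type*} [Fintype ι] [DecidableEq ι]
    (k : ℕ) (hk : 0 < k) (τ : ℝ) (hτ : 0 ≤ τ) (r : ℕ)
    (x : ℕ → ι → ℝ) (hx0 : ∀ i, x 0 i = 0)
    (hstep : ∀ j < r, ∃ (a : ι → ℝ) (K : Finset ι),
      (∀ i, 0 ≤ a i) ∧ (∑ i, a i) ≤ τ ∧ K.card = k ∧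
      (∀ i ∉ K, ∀ i' ∈ K, x j i + a i ≤ x j i' + a i') ∧
      (∀ i, x (j + 1) i = if i ∈ K then 0 else x j i + a i)) :
    ∀ i, x r i ≤ (∑ m ∈ Finset.range r, (1 : ℝ) / (m + 1)) * τ / k := by
  have hkR : (0:ℝ) < k := by exact_mod_cast hk
  have main : ∀ t, t ≤ r → ∀ T : Finset ι, ∑ i ∈ T, x t i ≤ tgt τ k t T.card := by
    intro t
    induction t with
    | zero => intro _ T; simp [hx0, tgt]
    | succ s ih =>
      intro hs T
      obtain ⟨a, K, ha0, haτ, hKcard, hmax, heq⟩ := hstep s (by omega)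
      set T' := T \ K with hT'
      have hdisj : Disjoint T' K := Finset.sdiff_disjoint
      have hA : ∑ i ∈ T, x (s+1) i = ∑ i ∈ T', x (s+1) i := by
        refine (Finset.sum_subset Finset.sdiff_subset ?_).symm
        intro i hi hni
        have hiK : i ∈ K := by
          by_contra hc
          exact hni (Finset.mem_sdiff.mpr ⟨hi, hc⟩)
        simp [heq i, hiK]
      have hxs : ∀ i ∈ T', x (s+1) i = x s i + a i := by
        intro i hi
        have : i ∉ K := (Finset.mem_sdiff.mp hi).2
        simp [heq i, this]
      have hkey : (k:ℝ) * ∑ i ∈ T', x (s+1) i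
          ≤ (T'.card : ℝ) * ∑ i' ∈ K, (x s i' + a i') := by
        calc (k:ℝ) * ∑ i ∈ T', x (s+1) i
            = ∑ i ∈ T', ∑ _i' ∈ K, x (s+1) i := by
              rw [Finset.mul_sum]
              refine Finset.sum_congr rfl fun i _ => ?_
              rw [Finset.sum_const, hKcard, nsmul_eq_mul]
          _ ≤ ∑ i ∈ T', ∑ i' ∈ K, (x s i' + a i') := by
              refine Finset.sum_le_sum fun i hi => Finset.sum_le_sum fun i' hi' => ?_
              rw [hxs i hi]
              exact hmax i (Finset.mem_sdiff.mp hi).2 i' hi'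
          _ = (T'.card : ℝ) * ∑ i' ∈ K, (x s i' + a i') := by
              rw [Finset.sum_const, nsmul_eq_mul]
      have hunion : (T' ∪ K).card = T'.card + k := by
        rw [Finset.card_union_of_disjoint hdisj, hKcard]
      have hsum_a : ∑ i ∈ T' ∪ K, a i ≤ τ :=
        le_trans (Finset.sum_le_sum_of_subset_of_nonneg (Finset.subset_univ _)
          (fun i _ _ => ha0 i)) haτ
      have hIH : ∑ i ∈ T' ∪ K, x s i ≤ tgt τ k s (T'.card + k) := by
        have := ih (by omega) (T' ∪ K)
        rwa [hunion] at this
      have hB : ((k:ℝ) + T'.card) * ∑ i ∈ T', x (s+1) i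
          ≤ (T'.card : ℝ) * (tgt τ k s (T'.card + k) + τ) := by
        have h1 : ∑ i ∈ T', x (s+1) i = ∑ i ∈ T', (x s i + a i) :=
          Finset.sum_congr rfl hxs
        have hcard0 : (0:ℝ) ≤ (T'.card : ℝ) := by positivity
        calc ((k:ℝ) + T'.card) * ∑ i ∈ T', x (s+1) i
            = (k:ℝ) * (∑ i ∈ T', x (s+1) i) + (T'.card:ℝ) * ∑ i ∈ T', x (s+1) i := by
              ring
          _ ≤ (T'.card:ℝ) * (∑ i' ∈ K, (x s i' + a i'))
              + (T'.card:ℝ) * ∑ i ∈ T', (x s i + a i) := by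
              rw [← h1]; exact add_le_add hkey le_rfl
          _ = (T'.card:ℝ) * ∑ i ∈ T' ∪ K, (x s i + a i) := by
              rw [Finset.sum_union hdisj]; ring
          _ = (T'.card:ℝ) * (∑ i ∈ T' ∪ K, x s i + ∑ i ∈ T' ∪ K, a i) := by
              rw [Finset.sum_add_distrib]
          _ ≤ (T'.card:ℝ) * (tgt τ k s (T'.card + k) + τ) := by
              exact mul_le_mul_of_nonneg_left (add_le_add hIH hsum_a) hcard0
      have hpos : (0:ℝ) < (k:ℝ) + T'.card := by positivity
      have hS : ∑ i ∈ T', x (s+1) i ≤ tgt τ k (s+1) T'.card := by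
        have h2 : ((k:ℝ) + T'.card) * ∑ i ∈ T', x (s+1) i
            ≤ ((k:ℝ) + T'.card) * tgt τ k (s+1) T'.card := by
          rw [tgt_rec τ k hk s T'.card]; exact hB
        exact le_of_mul_le_mul_left h2 hpos
      rw [hA]
      exact hS.trans (tgt_mono τ hτ k hk (s+1) T'.card T.card
        (Finset.card_le_card Finset.sdiff_subset))
  intro i
  have h1 := main r le_rfl {i}
  rw [Finset.sum_singleton, Finset.card_singleton] at h1
  refine h1.trans ?_
  have hEq : (∑ m ∈ Finset.range r, (1 : ℝ) / (m + 1)) * τ / k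
      = τ * ∑ j ∈ Finset.range r, (1:ℝ) / (((j:ℝ)+1) * k) := by
    rw [Finset.sum_mul, Finset.sum_div, Finset.mul_sum]
    refine Finset.sum_congr rfl fun j _ => ?_
    have hj : ((j:ℝ)+1) ≠ 0 := by positivity
    have hkne : (k:ℝ) ≠ 0 := ne_of_gt hkR
    field_simp
  rw [hEq]
  unfold tgt
  apply mul_le_mul_of_nonneg_left _ hτ
  apply Finset.sum_le_sum
  intro j _
  push_cast
  apply one_div_le_one_div_of_le (by positivity)
  nlinarith [hkR]
end

section
/- In the (τ,k)-game with n ≥ (r−j)k+1 cups, let S_j denote the total amount of water in the (r−j)k+1 fullest cups after round j. Then S_j / ((r−j)k+1) ≤ τ/((r−j+1)k+1) + S_{j−1}/((r−j+1)k+1) for every 1 ≤ j ≤ r. -/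
/-- The sum of the `m` largest values of `x` among indices in `s`
(maximum over all `m`-element subsets of `s` of the sum of values). -/
noncomputable def topSum {ι : Type*} [DecidableEq ι] (s : Finset ι) (x : ι → ℝ) (m : ℕ) : ℝ :=
  sSup {y | ∃ t ⊆ s, t.card = m ∧ y = ∑ i ∈ t, x i}

lemma topSum_bddAbove {ι : Type*} [Fintype ι] [DecidableEq ι] (s : Finset ι) (x : ι → ℝ) (m : ℕ) :
    BddAbove {y | ∃ t ⊆ s, t.card = m ∧ y = ∑ i ∈ t, x i} := by
  have hsub : {y | ∃ t ⊆ s, t.card = m ∧ y = ∑ i ∈ t, x i} ⊆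
      (fun t : Finset ι => ∑ i ∈ t, x i) '' Set.univ := by
    rintro y ⟨t, -, -, rfl⟩
    exact ⟨t, trivial, rfl⟩
  exact ((Set.finite_univ.image _).bddAbove).mono hsub

lemma le_topSum {ι : Type*} [Fintype ι] [DecidableEq ι] {s t : Finset ι} {x : ι → ℝ} {m : ℕ}
    (ht : t ⊆ s) (htc : t.card = m) : ∑ i ∈ t, x i ≤ topSum s x m :=
  le_csSup (topSum_bddAbove s x m) ⟨t, ht, htc, rfl⟩

lemma topSum_le {ι : Type*} [Fintype ι] [DecidableEq ι] {s : Finset ι} {x : ι → ℝ} {m : ℕ}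
    (hm : m ≤ s.card) {c : ℝ} (h : ∀ t ⊆ s, t.card = m → ∑ i ∈ t, x i ≤ c) :
    topSum s x m ≤ c := by
  obtain ⟨t, ht, htc⟩ := Finset.exists_subset_card_eq hm
  refine csSup_le ⟨_, t, ht, htc, rfl⟩ ?_
  rintro y ⟨t, ht, htc, rfl⟩
  exact h t ht htc

/-- In the `(τ,k)`-game with at least `(r−j+1)k+1` cups, letting `S_j` denote the
total water in the `(r−j)k+1` fullest cups after round `j`, one has
`S_j/((r−j)k+1) ≤ τ/((r−j+1)k+1) + S_{j−1}/((r−j+1)k+1)` for `1 ≤ j ≤ r`. -/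
theorem tau_k_game_recurrence {ι : Type*} [Fintype ι] [DecidableEq ι]
    (k : ℕ) (hk : 0 < k) (τ : ℝ) (hτ : 0 ≤ τ) (r j : ℕ) (hj1 : 1 ≤ j) (hjr : j ≤ r)
    (hn : (r - j) * k + k + 1 ≤ Fintype.card ι)
    (x : ℕ → ι → ℝ) (hx0 : ∀ i, x 0 i = 0)
    (hstep : ∀ j' < r, ∃ (a : ι → ℝ) (K : Finset ι),
      (∀ i, 0 ≤ a i) ∧ (∑ i, a i) ≤ τ ∧ K.card = k ∧
      (∀ i ∉ K, ∀ i' ∈ K, x j' i + a i ≤ x j' i' + a i') ∧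
      (∀ i, x (j' + 1) i = if i ∈ K then 0 else x j' i + a i)) :
    topSum Finset.univ (x j) ((r - j) * k + 1) / ((r - j) * k + 1)
      ≤ τ / ((r - j) * k + k + 1)
        + topSum Finset.univ (x (j - 1)) ((r - j) * k + k + 1) / ((r - j) * k + k + 1) := by
  -- nonnegativity of all states
  have hnn : ∀ p, p ≤ r → ∀ i, 0 ≤ x p i := by
    intro p
    induction p with
    | zero => intro _ i; rw [hx0]
    | succ p ih =>
      intro hp i
      obtain ⟨a, K, ha0, -, -, -, hx⟩ := hstep p (by omega)
      rw [hx i]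
      split
      · exact le_refl 0
      · exact add_nonneg (ih (by omega) i) (ha0 i)
  obtain ⟨a, K, ha0, haτ, hKcard, hKtop, hxj⟩ := hstep (j - 1) (by omega)
  have hjeq : j - 1 + 1 = j := by omega
  rw [hjeq] at hxj
  set y : ι → ℝ := fun i => x (j - 1) i + a i with hy
  have hy0 : ∀ i, 0 ≤ y i := fun i => add_nonneg (hnn (j - 1) (by omega) i) (ha0 i)
  set m : ℕ := (r - j) * k + 1 with hm
  set M : ℕ := (r - j) * k + k + 1 with hM
  have hcard : (Finset.univ : Finset ι).card = Fintype.card ι := Finset.card_univ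
  have hMcard : M ≤ (Finset.univ : Finset ι).card := by rw [hcard]; exact hn
  have hmcard : m ≤ (Finset.univ : Finset ι).card := by omega
  have hKuniv : K ⊆ Finset.univ := Finset.subset_univ K
  have hcompl : ((Finset.univ : Finset ι) \ K).card = Fintype.card ι - k := by
    rw [Finset.card_sdiff_of_subset hKuniv, hcard, hKcard]
  have hmpos : (0:ℝ) < (m:ℝ) := by positivity
  have hMpos : (0:ℝ) < (M:ℝ) := by positivity
  -- Step 1
  have step1 : topSum Finset.univ (x j) m ≤ (m : ℝ) * topSum Finset.univ y M / M := by
    apply topSum_le hmcard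
    intro t ht htc
    have hsplit : ∑ i ∈ t, x j i = ∑ i ∈ t \ K, y i := by
      rw [← Finset.sum_inter_add_sum_sdiff t K (x j)]
      have h1 : ∑ i ∈ t ∩ K, x j i = 0 := by
        apply Finset.sum_eq_zero
        intro i hi
        rw [hxj i, if_pos (Finset.mem_inter.mp hi).2]
      have h2 : ∑ i ∈ t \ K, x j i = ∑ i ∈ t \ K, y i := by
        apply Finset.sum_congr rfl
        intro i hi
        rw [hxj i, if_neg (Finset.mem_sdiff.mp hi).2]
      rw [h1, h2, zero_add]
    obtain ⟨T, hT1, hT2, hTcard⟩ := Finset.exists_subsuperset_card_eq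
      (t := (Finset.univ : Finset ι) \ K) (s := t \ K) (n := m)
      (Finset.sdiff_subset_sdiff ht (le_refl K))
      (by
        have : (t \ K).card ≤ t.card := Finset.card_le_card (Finset.sdiff_subset)
        omega)
      (by rw [hcompl]; omega)
    have hTsum : ∑ i ∈ t \ K, y i ≤ ∑ i ∈ T, y i :=
      Finset.sum_le_sum_of_subset_of_nonneg hT1 (fun i _ _ => hy0 i)
    have hdisj : Disjoint T K := by
      refine Finset.disjoint_left.mpr ?_
      intro i hi
      exact (Finset.mem_sdiff.mp (hT2 hi)).2
    have hkey : ∀ i' ∈ K, ∑ i ∈ T, y i ≤ (m : ℝ) * y i' := by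
      intro i' hi'
      calc ∑ i ∈ T, y i ≤ ∑ _i ∈ T, y i' := by
              apply Finset.sum_le_sum
              intro i hi
              exact hKtop i (Finset.mem_sdiff.mp (hT2 hi)).2 i' hi'
        _ = (m : ℝ) * y i' := by rw [Finset.sum_const, hTcard, nsmul_eq_mul]
    have hKsum : (k : ℝ) * ∑ i ∈ T, y i ≤ (m : ℝ) * ∑ i' ∈ K, y i' := by
      calc (k : ℝ) * ∑ i ∈ T, y i = ∑ _i' ∈ K, ∑ i ∈ T, y i := by
              rw [Finset.sum_const, hKcard, nsmul_eq_mul]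
        _ ≤ ∑ i' ∈ K, (m : ℝ) * y i' := Finset.sum_le_sum hkey
        _ = (m : ℝ) * ∑ i' ∈ K, y i' := by rw [Finset.mul_sum]
    have hunion : ∑ i ∈ T ∪ K, y i = ∑ i ∈ T, y i + ∑ i ∈ K, y i :=
      Finset.sum_union hdisj
    have hucard : (T ∪ K).card = M := by
      rw [Finset.card_union_of_disjoint hdisj, hTcard, hKcard]; omega
    have htop : ∑ i ∈ T ∪ K, y i ≤ topSum Finset.univ y M :=
      le_topSum (Finset.subset_univ _) hucard
    have hMm : (M : ℝ) = (m : ℝ) + (k : ℝ) := by rw [hM, hm]; push_cast; ring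
    have hfinal : (M : ℝ) * ∑ i ∈ T, y i ≤ (m : ℝ) * topSum Finset.univ y M := by
      calc (M : ℝ) * ∑ i ∈ T, y i = (m : ℝ) * ∑ i ∈ T, y i + (k : ℝ) * ∑ i ∈ T, y i := by
              rw [hMm]; ring
        _ ≤ (m : ℝ) * ∑ i ∈ T, y i + (m : ℝ) * ∑ i' ∈ K, y i' := by linarith
        _ = (m : ℝ) * ∑ i ∈ T ∪ K, y i := by rw [hunion]; ring
        _ ≤ (m : ℝ) * topSum Finset.univ y M := by
              exact mul_le_mul_of_nonneg_left htop (le_of_lt hmpos)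
    rw [hsplit]
    calc ∑ i ∈ t \ K, y i ≤ ∑ i ∈ T, y i := hTsum
      _ ≤ (m : ℝ) * topSum Finset.univ y M / M := by
          rw [le_div_iff₀ hMpos]; linarith
  -- Step 2
  have step2 : topSum Finset.univ y M ≤ topSum Finset.univ (x (j-1)) M + τ := by
    apply topSum_le hMcard
    intro t ht htc
    have : ∑ i ∈ t, y i = ∑ i ∈ t, x (j-1) i + ∑ i ∈ t, a i := Finset.sum_add_distrib
    rw [this]
    have h1 : ∑ i ∈ t, x (j-1) i ≤ topSum Finset.univ (x (j-1)) M := le_topSum ht htc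
    have h2 : ∑ i ∈ t, a i ≤ τ := by
      calc ∑ i ∈ t, a i ≤ ∑ i, a i :=
            Finset.sum_le_sum_of_subset_of_nonneg ht (fun i _ _ => ha0 i)
        _ ≤ τ := haτ
    linarith
  -- Conclude
  have hgoal : topSum Finset.univ (x j) m / m
      ≤ τ / M + topSum Finset.univ (x (j-1)) M / M := by
    have h1 : topSum Finset.univ (x j) m / m ≤ topSum Finset.univ y M / M := by
      rw [div_le_div_iff₀ hmpos hMpos]
      calc topSum Finset.univ (x j) m * M ≤ ((m : ℝ) * topSum Finset.univ y M / M) * M :=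
            mul_le_mul_of_nonneg_right step1 (le_of_lt hMpos)
        _ = topSum Finset.univ y M / M * M * m := by field_simp
        _ = topSum Finset.univ y M * m := by rw [div_mul_cancel₀ _ (ne_of_gt hMpos)]
    have h2 : topSum Finset.univ y M / M ≤ (topSum Finset.univ (x (j-1)) M + τ) / M := by
      gcongr
    calc topSum Finset.univ (x j) m / m ≤ topSum Finset.univ y M / M := h1
      _ ≤ (topSum Finset.univ (x (j-1)) M + τ) / M := h2
      _ = τ / M + topSum Finset.univ (x (j-1)) M / M := by ring
  convert hgoal using 2 <;> push_cast [hm, hM, Nat.cast_sub hjr] <;> ring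
end

section
/- Given n points in the unit square [0,1]², there exists a path (a polygonal tour visiting all n points, in some order) of total length at most √(2n) + 7/4. -/
/-!
Cut the square into `M ≈ √(2n)` horizontal strips of height `1/M` and pair consecutive strips
into lanes of height `2/M`; this can be done in two ways, with centre lines at heights `2k/M`,
respectively `(2k+1)/M`. For either family, sweep the lanes from bottom to top, alternately
left to right and right to left, and reach every point by a vertical detour from the centre
line of its lane. Ordering the points by their position along this snake, the path is no
longer than the snake (at most `M/2` lanes of length `1 + 2/M`) plus twice the detours. A
point of strip `j` lies between its two centre lines `j/M` and `(j+1)/M`, so the detours of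
both families add up to `n/M`; for `M ≈ √(2n)` the two paths then have average length at
most `√(2n) + 7/4`.
-/

open Set

variable {α : Type*} [PseudoMetricSpace α]

noncomputable def pathLength {n : ℕ} (q : Fin n → α) : ℝ :=
  ∑ i ∈ Finset.range n,
    if h : i + 1 < n then dist (q ⟨i, Nat.lt_of_succ_lt h⟩) (q ⟨i + 1, h⟩) else 0

lemma pathLength_eq_sum {m : ℕ} (q : Fin (m + 1) → α) :
    pathLength q = ∑ i : Fin m, dist (q i.castSucc) (q i.succ) := by
  rw [pathLength, Finset.sum_range_succ, dif_neg (lt_irrefl _), add_zero,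
    ← Fin.sum_univ_eq_sum_range]
  exact Finset.sum_congr rfl fun i _ => dif_pos (by omega)

lemma sum_succ_sub_castSucc {m : ℕ} (F : Fin (m + 1) → ℝ) :
    ∑ i : Fin m, (F i.succ - F i.castSucc) = F (Fin.last m) - F 0 := by
  have h₁ := Fin.sum_univ_succ F
  have h₂ := Fin.sum_univ_castSucc F
  rw [Finset.sum_sub_distrib]
  linarith

lemma exists_pathLength_le_of_potential {m : ℕ} (q : Fin (m + 1) → α)
    (f d : Fin (m + 1) → ℝ) {lo hi : ℝ} (hf : ∀ i, f i ∈ Icc lo hi)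
    (hd : ∀ i, 0 ≤ d i)
    (hdist : ∀ a b, f a ≤ f b → dist (q a) (q b) ≤ f b - f a + d a + d b) :
    ∃ σ : Equiv.Perm (Fin (m + 1)), pathLength (q ∘ σ) ≤ hi - lo + 2 * ∑ i, d i := by
  set σ := Tuple.sort f
  refine ⟨σ, ?_⟩
  have hedge : ∀ i : Fin m, dist (q (σ i.castSucc)) (q (σ i.succ)) ≤
      (f (σ i.succ) - f (σ i.castSucc)) + d (σ i.castSucc) + d (σ i.succ) :=
    fun i => hdist _ _ (Tuple.monotone_sort f (Fin.castSucc_le_succ i))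
  have hsum : ∑ i, d (σ i) = ∑ i, d i := Equiv.sum_comp σ d
  have hcs := Fin.sum_univ_castSucc (d ∘ σ)
  have hs := Fin.sum_univ_succ (d ∘ σ)
  have htel := sum_succ_sub_castSucc (f ∘ σ)
  simp only [Function.comp_apply] at hcs hs htel
  calc pathLength (q ∘ σ)
      ≤ ∑ i : Fin m,
          ((f (σ i.succ) - f (σ i.castSucc)) + d (σ i.castSucc) + d (σ i.succ)) := by
        rw [pathLength_eq_sum]; exact Finset.sum_le_sum fun i _ => hedge i
    _ = f (σ (Fin.last m)) - f (σ 0) + (∑ i : Fin m, d (σ i.castSucc))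
          + ∑ i : Fin m, d (σ i.succ) := by
        rw [Finset.sum_add_distrib, Finset.sum_add_distrib, htel]
    _ ≤ hi - lo + 2 * ∑ i, d i := by
        linarith [(hf (σ (Fin.last m))).2, (hf (σ 0)).1, hd (σ 0), hd (σ (Fin.last m))]

lemma dist_le_abs_add_abs (P Q : EuclideanSpace ℝ (Fin 2)) :
    dist P Q ≤ |P 0 - Q 0| + |P 1 - Q 1| := by
  rw [EuclideanSpace.dist_eq, Fin.sum_univ_two, Real.dist_eq, Real.dist_eq, Real.sqrt_le_iff]
  constructor
  · positivity
  · nlinarith [abs_nonneg (P 0 - Q 0), abs_nonneg (P 1 - Q 1), sq_abs (P 0 - Q 0),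
      sq_abs (P 1 - Q 1)]

/-- Position along lane `k` of the snake: even lanes are swept left to right, odd lanes right
to left. -/
def snakeCoord (k : ℕ) (x : ℝ) : ℝ := if Even k then x else 1 - x

lemma snakeCoord_mem_Icc (k : ℕ) {x : ℝ} (hx : x ∈ Icc 0 1) : snakeCoord k x ∈ Icc 0 1 := by
  unfold snakeCoord
  split_ifs
  · exact hx
  · constructor <;> linarith [hx.1, hx.2]

lemma abs_snakeCoord_sub_snakeCoord (k : ℕ) (x y : ℝ) :
    |snakeCoord k x - snakeCoord k y| = |x - y| := by
  unfold snakeCoord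
  split_ifs
  · rfl
  · rw [show 1 - x - (1 - y) = -(x - y) by ring, abs_neg]

lemma abs_sub_le_snakeCoord_of_lt {x y : ℝ} (hx : x ∈ Icc 0 1) (hy : y ∈ Icc 0 1) {k l : ℕ}
    (hkl : k < l) : |x - y| ≤ ((l : ℝ) - k) + snakeCoord l y - snakeCoord k x := by
  rcases (Nat.succ_le_of_lt hkl).eq_or_lt with rfl | hkl₂
  · push_cast
    rcases Nat.even_or_odd k with hk | hk
    · have hk' : ¬Even (k + 1) := by simpa [Nat.even_add_one] using hk
      simp only [snakeCoord, if_pos hk, if_neg hk']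
      rw [abs_sub_le_iff]; constructor <;> linarith [hx.1, hx.2, hy.1, hy.2]
    · have hk' : Even (k + 1) := by simpa [Nat.even_add_one, Nat.not_even_iff_odd] using hk
      simp only [snakeCoord, if_neg (Nat.not_even_iff_odd.2 hk), if_pos hk']
      rw [abs_sub_le_iff]; constructor <;> linarith [hx.1, hx.2, hy.1, hy.2]
  · have hgap : (k : ℝ) + 2 ≤ l := by exact_mod_cast hkl₂
    have hsx := snakeCoord_mem_Icc k hx
    have hsy := snakeCoord_mem_Icc l hy
    rw [abs_sub_le_iff]
    constructor <;> linarith [hx.1, hx.2, hy.1, hy.2, hsx.1, hsx.2, hsy.1, hsy.2]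

/-- Distance travelled along the snake whose lanes have length `1` and are `h` apart. -/
def snakePotential (h : ℝ) (k : ℕ) (P : EuclideanSpace ℝ (Fin 2)) : ℝ :=
  k * (1 + h) + snakeCoord k (P 0)

lemma snakePotential_mem_Icc {h : ℝ} (hh : 0 ≤ h) {k K : ℕ} (hk : k ≤ K)
    {P : EuclideanSpace ℝ (Fin 2)} (hP : P 0 ∈ Icc 0 1) :
    snakePotential h k P ∈ Icc 0 (K * (1 + h) + 1) := by
  have hs := snakeCoord_mem_Icc k hP
  have hkK : (k : ℝ) * (1 + h) ≤ K * (1 + h) := by gcongr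
  unfold snakePotential
  constructor <;> nlinarith [hs.1, hs.2]

lemma le_of_snakePotential_le {h : ℝ} (hh : 0 < h) {P Q : EuclideanSpace ℝ (Fin 2)}
    (hP : P 0 ∈ Icc 0 1) (hQ : Q 0 ∈ Icc 0 1) {k l : ℕ}
    (hΦ : snakePotential h k P ≤ snakePotential h l Q) : k ≤ l := by
  by_contra! hlk
  have hlk' : (l : ℝ) + 1 ≤ k := by exact_mod_cast hlk
  have hsP := snakeCoord_mem_Icc k hP
  have hsQ := snakeCoord_mem_Icc l hQ
  unfold snakePotential at hΦ
  nlinarith [hsP.1, hsQ.2]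

lemma dist_le_snakePotential_sub {h : ℝ} (hh : 0 < h) (c : ℝ) {P Q : EuclideanSpace ℝ (Fin 2)}
    (hP : P 0 ∈ Icc 0 1) (hQ : Q 0 ∈ Icc 0 1) {k l : ℕ}
    (hΦ : snakePotential h k P ≤ snakePotential h l Q) :
    dist P Q ≤ snakePotential h l Q - snakePotential h k P
      + |P 1 - (c + k * h)| + |Q 1 - (c + l * h)| := by
  have hkl := le_of_snakePotential_le hh hP hQ hΦ
  have hkl' : (k : ℝ) ≤ l := by exact_mod_cast hkl
  have hy : |P 1 - Q 1| ≤ |P 1 - (c + k * h)| + |Q 1 - (c + l * h)| + (l - k) * h := by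
    have hlk : 0 ≤ ((l : ℝ) - k) * h := mul_nonneg (by linarith) hh.le
    rw [abs_sub_le_iff]
    constructor <;> linarith [le_abs_self (P 1 - (c + k * h)), neg_abs_le (P 1 - (c + k * h)),
      le_abs_self (Q 1 - (c + l * h)), neg_abs_le (Q 1 - (c + l * h))]
  have hx : |P 0 - Q 0| ≤ ((l : ℝ) - k) + snakeCoord l (Q 0) - snakeCoord k (P 0) := by
    rcases hkl.eq_or_lt with rfl | hlt
    · unfold snakePotential at hΦ
      rw [← abs_snakeCoord_sub_snakeCoord k, abs_sub_comm, abs_of_nonneg (by linarith)]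
      linarith
    · exact abs_sub_le_snakeCoord_of_lt hP hQ hlt
  unfold snakePotential
  linarith [dist_le_abs_add_abs P Q]

lemma exists_lt_mem_Icc_div {y : ℝ} (hy : y ∈ Icc 0 1) {M : ℕ} (hM : 0 < M) :
    ∃ j < M, y ∈ Icc (j / M : ℝ) ((j + 1) / M) := by
  have hMR : (0 : ℝ) < M := by exact_mod_cast hM
  rcases hy.2.lt_or_eq with hlt | rfl
  · refine ⟨⌊y * M⌋₊, (Nat.floor_lt (by nlinarith [hy.1])).2 (by nlinarith), ?_, ?_⟩
    · rw [div_le_iff₀ hMR]; exact Nat.floor_le (by nlinarith [hy.1])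
    · rw [le_div_iff₀ hMR]; exact (Nat.lt_floor_add_one _).le
  · refine ⟨M - 1, by omega, ?_, ?_⟩
    · rw [div_le_one hMR]; exact_mod_cast Nat.sub_le M 1
    · rw [Nat.cast_pred hM, sub_add_cancel, div_self hMR.ne']

lemma abs_sub_add_abs_sub_of_mem_Icc {a b y : ℝ} (hy : y ∈ Icc a b) :
    |y - a| + |y - b| = b - a := by
  rw [abs_of_nonneg (by linarith [hy.1]), abs_of_nonpos (by linarith [hy.2])]
  ring

/-- In the two families, strip `j` belongs to the lanes `(j + 1) / 2` and `j / 2`, whose centre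
lines are `j/M` and `(j+1)/M` in some order. -/
lemma abs_sub_add_abs_sub_lane_centers (M : ℝ) (j : ℕ) {y : ℝ}
    (hy : y ∈ Icc (j / M) ((j + 1) / M)) :
    |y - (0 + ((j + 1) / 2 : ℕ) * (2 / M))| + |y - (1 / M + (j / 2 : ℕ) * (2 / M))|
      = 1 / M := by
  have hM : ((j : ℝ) + 1) / M - j / M = 1 / M := by ring
  rcases Nat.even_or_odd' j with ⟨t, rfl | rfl⟩
  · rw [show (2 * t + 1) / 2 = t by omega, show 2 * t / 2 = t by omega,
      show 0 + (t : ℝ) * (2 / M) = ((2 * t : ℕ) : ℝ) / M by push_cast; ring,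
      show 1 / M + (t : ℝ) * (2 / M) = (((2 * t : ℕ) : ℝ) + 1) / M by push_cast; ring,
      abs_sub_add_abs_sub_of_mem_Icc hy, hM]
  · rw [show (2 * t + 1 + 1) / 2 = t + 1 by omega, show (2 * t + 1) / 2 = t by omega,
      show 0 + ((t + 1 : ℕ) : ℝ) * (2 / M) = (((2 * t + 1 : ℕ) : ℝ) + 1) / M by
        push_cast; ring,
      show 1 / M + (t : ℝ) * (2 / M) = ((2 * t + 1 : ℕ) : ℝ) / M by push_cast; ring,
      add_comm, abs_sub_add_abs_sub_of_mem_Icc hy, hM]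

lemma exists_pathLength_le_snake {m : ℕ} (p : Fin (m + 1) → EuclideanSpace ℝ (Fin 2))
    (hp : ∀ i, p i 0 ∈ Icc 0 1) (lane : Fin (m + 1) → ℕ) {K : ℕ}
    (hK : ∀ i, lane i ≤ K) {h : ℝ} (hh : 0 < h) (c : ℝ) :
    ∃ σ : Equiv.Perm (Fin (m + 1)),
      pathLength (p ∘ σ) ≤ K * (1 + h) + 1 + 2 * ∑ i, |p i 1 - (c + lane i * h)| := by
  simpa using exists_pathLength_le_of_potential p (fun i => snakePotential h (lane i) (p i))
    (fun i => |p i 1 - (c + lane i * h)|) (fun i => snakePotential_mem_Icc hh.le (hK i) (hp i))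
    (fun i => abs_nonneg _)
    (fun a b hab => dist_le_snakePotential_sub hh c (hp a) (hp b) hab)

lemma exists_nat_pos_abs_sub_le_half {X : ℝ} (hX : 1 / 2 ≤ X) :
    ∃ M : ℕ, 0 < M ∧ |(M : ℝ) - X| ≤ 1 / 2 := by
  refine ⟨⌊X + 1 / 2⌋₊, Nat.floor_pos.2 (by linarith), abs_sub_le_iff.2 ⟨?_, ?_⟩⟩
  · linarith [Nat.floor_le (by linarith : (0 : ℝ) ≤ X + 1 / 2)]
  · linarith [Nat.lt_floor_add_one (X + 1 / 2)]

/-- With `X² = 2n`, the left side bounds the total length of both snake paths: their lanes,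
`M - 1` in all, and their detours, `2n/M` in all. -/
lemma sub_one_mul_add_sq_div_le {M X : ℝ} (hM : 1 ≤ M) (hMX : |M - X| ≤ 1 / 2) :
    (M - 1) * (1 + 2 / M) + 2 + X ^ 2 / M ≤ 2 * (X + 7 / 4) := by
  have hsq : (M - X) ^ 2 ≤ 1 / 4 := by
    nlinarith [sq_abs (M - X), abs_nonneg (M - X)]
  rw [← sub_nonneg]
  have key : 2 * (X + 7 / 4) - ((M - 1) * (1 + 2 / M) + 2 + X ^ 2 / M)
      = (M / 2 + 2 - (M - X) ^ 2) / M := by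
    field_simp
    ring
  rw [key]
  apply div_nonneg <;> linarith

/-- Few's theorem: given `n` points in the unit square `[0,1]²`, there is an
ordering of the points such that the polygonal path through them in this order
has total length at most `√(2n) + 7/4`. -/
theorem few_path_in_unit_square (n : ℕ) (p : Fin n → EuclideanSpace ℝ (Fin 2))
    (hp : ∀ i j, p i j ∈ Set.Icc (0 : ℝ) 1) :
    ∃ σ : Equiv.Perm (Fin n),
      (∑ i ∈ Finset.range n,
        if h : i + 1 < n then dist (p (σ ⟨i, by omega⟩)) (p (σ ⟨i + 1, h⟩)) else 0)
      ≤ Real.sqrt (2 * n) + 7 / 4 := by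
  rcases n with _ | m
  · exact ⟨1, by norm_num⟩
  set X := Real.sqrt (2 * ↑(m + 1))
  have hX : X ^ 2 = 2 * ↑(m + 1) := Real.sq_sqrt (by positivity)
  have hX₁ : 1 ≤ X := Real.one_le_sqrt.2 (by norm_cast; omega)
  obtain ⟨M, hM, hMX⟩ := exists_nat_pos_abs_sub_le_half (X := X) (by linarith)
  have hMR : (1 : ℝ) ≤ M := by exact_mod_cast hM
  choose j hjM hj using fun i => exists_lt_mem_Icc_div (hp i 1) hM
  have hh : (0 : ℝ) < 2 / M := by positivity
  obtain ⟨σ₀, hσ₀⟩ := exists_pathLength_le_snake p (fun i => hp i 0)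
    (fun i => (j i + 1) / 2) (K := M / 2) (fun i => by have := hjM i; omega) hh 0
  obtain ⟨σ₁, hσ₁⟩ := exists_pathLength_le_snake p (fun i => hp i 0) (fun i => j i / 2)
    (K := (M - 1) / 2) (fun i => by have := hjM i; omega) hh (1 / M)
  have hdetour : ∑ i, |p i 1 - (0 + ((j i + 1) / 2 : ℕ) * (2 / M))|
      + ∑ i, |p i 1 - (1 / M + (j i / 2 : ℕ) * (2 / M))| = ↑(m + 1) / M := by
    rw [← Finset.sum_add_distrib,
      Finset.sum_congr rfl fun i _ => abs_sub_add_abs_sub_lane_centers M (j i) (hj i)]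
    simp [div_eq_mul_inv]
  have hlanes : ((M / 2 : ℕ) : ℝ) + ((M - 1) / 2 : ℕ) = M - 1 := by
    rw [eq_sub_iff_add_eq]; exact_mod_cast (by omega : M / 2 + (M - 1) / 2 + 1 = M)
  have hboth : pathLength (p ∘ σ₀) + pathLength (p ∘ σ₁) ≤ 2 * (X + 7 / 4) := by
    linear_combination hσ₀ + hσ₁ + (1 + 2 / (M : ℝ)) * hlanes + 2 * hdetour
      + sub_one_mul_add_sq_div_le hMR hMX - hX / (M : ℝ)
  rcases le_total (pathLength (p ∘ σ₀)) (pathLength (p ∘ σ₁)) with h | h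
  · exact ⟨σ₀, show pathLength (p ∘ σ₀) ≤ X + 7 / 4 by linarith⟩
  · exact ⟨σ₁, show pathLength (p ∘ σ₁) ≤ X + 7 / 4 by linarith⟩
end
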